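/- arXiv:1310.8084 — 2 statements merged into one kernel-verified Lean document; each statement's English description precedes it below -/
import Mathlib

section
/- Let u⁺, u⁻ ∈ ℝ^d, let σ⁺, σ⁻ ∈ ℝ^{d×d}_{sym}, let n⁺ ∈ ℝ^d be a unit vector with n⁻ = −n⁺, and let δ ∈ [0,1]. Define the weighted averages {u}_{1−δ} = (1−δ)u⁺ + δ u⁻ and {u} = (u⁺+u⁻)/2, the tensor jump [u] = u⁺ ⊙ n⁺ + u⁻ ⊙ n⁻ with u ⊙ n = (u nᵀ + n uᵀ)/2, the tensor averages {σ}_δ = δσ⁺ + (1−δ)σ⁻ and {σ} = (σ⁺+σ⁻)/2, and the vector jump [σ] = σ⁺ n⁺ + σ⁻ n⁻. Then −⟨{u}_{1−δ} − {u}, [σ]⟩ = ({σ}_δ − {σ}, [u]), where ⟨·,·⟩ is the Euclidean inner product on ℝ^d and (·,·) is the Frobenius inner product on matrices. -/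
/-- Pointwise duality between weighted averages of displacement and of stress:
−⟨{u}_{1−δ} − {u}, [σ]⟩ = ({σ}_δ − {σ}, [u]). -/
theorem stmt_7 (d : ℕ) (up um : Fin d → ℝ)
    (σp σm : Matrix (Fin d) (Fin d) ℝ) (hp : σp.IsSymm) (hm : σm.IsSymm)
    (np : Fin d → ℝ) (hn : ∑ i, np i * np i = 1)
    (δ : ℝ) (hδ : δ ∈ Set.Icc (0:ℝ) 1) :
    -(∑ i, (((1 - δ) * up i + δ * um i) - (up i + um i) / 2) *
        (σp.mulVec np i + σm.mulVec (-np) i)) =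
      ∑ i, ∑ j,
        ((δ • σp + (1 - δ) • σm) i j - ((1 / 2 : ℝ) • (σp + σm)) i j) *
          ((up i * np j + np i * up j) / 2 +
           (um i * (-np j) + (-np i) * um j) / 2) := by
  have swap : ∀ (S : Matrix (Fin d) (Fin d) ℝ), S.IsSymm → ∀ a : Fin d → ℝ,
      ∑ i, ∑ j, S i j * (np i * a j) = ∑ i, ∑ j, S i j * (a i * np j) := by
    intro S hS a
    rw [Finset.sum_comm]
    exact Finset.sum_congr rfl fun i _ => Finset.sum_congr rfl fun j _ => by
      rw [hS.apply i j]; ring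
  have hsp := swap σp hp up
  have hsm := swap σm hm up
  have hsp' := swap σp hp um
  have hsm' := swap σm hm um
  simp only [Matrix.mulVec, dotProduct, Pi.neg_apply, Matrix.add_apply,
    Matrix.smul_apply, smul_eq_mul, mul_neg, neg_mul]
  simp only [Finset.mul_sum, Finset.sum_mul, ← Finset.sum_add_distrib,
    ← Finset.sum_sub_distrib, ← Finset.sum_neg_distrib, neg_neg]
  rw [← sub_eq_zero, ← Finset.sum_sub_distrib]
  simp only [← Finset.sum_sub_distrib]
  have key : ∀ i j : Fin d,
      -(((1 - δ) * up i + δ * um i - (up i + um i) / 2) *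
          (σp i j * np j + -(σm i j * np j))) -
        (δ * σp i j + (1 - δ) * σm i j - 1 / 2 * (σp i j + σm i j)) *
          ((up i * np j + np i * up j) / 2 + (-(um i * np j) + -(np i * um j)) / 2) =
      ((δ - 1/2)/2) * (σp i j * (up i * np j)) - ((δ - 1/2)/2) * (σp i j * (np i * up j))
      - ((δ - 1/2)/2) * (σm i j * (up i * np j)) + ((δ - 1/2)/2) * (σm i j * (np i * up j))
      - ((δ - 1/2)/2) * (σp i j * (um i * np j)) + ((δ - 1/2)/2) * (σp i j * (np i * um j))
      + ((δ - 1/2)/2) * (σm i j * (um i * np j)) - ((δ - 1/2)/2) * (σm i j * (np i * um j)) := by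
    intro i j; ring
  simp only [Finset.sum_congr rfl fun i _ => Finset.sum_congr rfl fun j _ => key i j]
  simp only [Finset.sum_add_distrib, Finset.sum_sub_distrib, ← Finset.mul_sum]
  linear_combination ((δ - 1/2)/2) * (hsm - hsp + hsp' - hsm')
end

section
/- Let H be a real Hilbert space, M : H → H symmetric with ⟨Mv,v⟩ ≥ ρ*‖v‖² for some ρ* > 0, and A : H → H symmetric nonnegative. Suppose u : [0,T] → H is twice continuously differentiable, f : [0,T] → H is continuous, and ⟨M u''(t), v⟩ + ⟨A u(t), v⟩ = ⟨f(t), v⟩ for all v ∈ H, t ∈ (0,T]. Define E(t)² = ⟨M u'(t), u'(t)⟩ + ⟨A u(t), u(t)⟩ (taking the nonnegative square root). Then for all t ∈ [0,T], E(t) ≤ E(0) + ρ*^{−1/2} ∫₀ᵗ ‖f(τ)‖ dτ. -/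
open Set
open scoped RealInnerProductSpace

/-- Abstract a priori energy estimate with a forcing term:
E(t) ≤ E(0) + ρ*^{−1/2} ∫₀ᵗ ‖f‖. -/
theorem stmt_10 {H : Type*} [NormedAddCommGroup H] [InnerProductSpace ℝ H]
    (T : ℝ) (hT : 0 < T)
    (M A : H →L[ℝ] H) (ρstar : ℝ) (hρ : 0 < ρstar)
    (hMsym : ∀ x y : H, ⟪M x, y⟫ = ⟪x, M y⟫)
    (hMcoer : ∀ x : H, ρstar * ‖x‖ ^ 2 ≤ ⟪M x, x⟫)
    (hAsym : ∀ x y : H, ⟪A x, y⟫ = ⟪x, A y⟫)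
    (hAnn : ∀ x : H, 0 ≤ ⟪A x, x⟫)
    (u u' u'' : ℝ → H) (f : ℝ → H) (hf : ContinuousOn f (Icc 0 T))
    (hu : ∀ t ∈ Icc (0:ℝ) T, HasDerivAt u (u' t) t)
    (hu' : ∀ t ∈ Icc (0:ℝ) T, HasDerivAt u' (u'' t) t)
    (hu'' : ContinuousOn u'' (Icc 0 T))
    (heq : ∀ t ∈ Ioc (0:ℝ) T, ∀ v : H,
      ⟪M (u'' t), v⟫ + ⟪A (u t), v⟫ = ⟪f t, v⟫)
    (E : ℝ → ℝ)
    (hE : ∀ t, E t = Real.sqrt (⟪M (u' t), u' t⟫ + ⟪A (u t), u t⟫)) :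
    ∀ t ∈ Icc (0:ℝ) T,
      E t ≤ E 0 + (Real.sqrt ρstar)⁻¹ * ∫ τ in (0:ℝ)..t, ‖f τ‖ := by
  intro t ht
  obtain ⟨ht0, htT⟩ := ht
  set Q : ℝ → ℝ := fun s => ⟪M (u' s), u' s⟫ + ⟪A (u s), u s⟫ with hQdef
  have hQnonneg : ∀ s, 0 ≤ Q s := fun s =>
    add_nonneg (le_trans (by positivity) (hMcoer (u' s))) (hAnn (u s))
  have hcontu : ContinuousOn u (Icc 0 T) := fun s hs =>
    ((hu s hs).continuousAt).continuousWithinAt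
  have hcontu' : ContinuousOn u' (Icc 0 T) := fun s hs =>
    ((hu' s hs).continuousAt).continuousWithinAt
  set Q' : ℝ → ℝ := fun s => 2 * ⟪M (u'' s), u' s⟫ + 2 * ⟪A (u s), u' s⟫ with hQ'def
  have hQderiv : ∀ s ∈ Icc (0:ℝ) T, HasDerivAt Q (Q' s) s := by
    intro s hs
    have h1 : HasDerivAt (fun τ => M (u' τ)) (M (u'' s)) s :=
      M.hasFDerivAt.comp_hasDerivAt s (hu' s hs)
    have h2 : HasDerivAt (fun τ => A (u τ)) (A (u' s)) s :=
      A.hasFDerivAt.comp_hasDerivAt s (hu s hs)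
    have hd1 := h1.inner ℝ (hu' s hs)
    have hd2 := h2.inner ℝ (hu s hs)
    have hadd := hd1.add hd2
    refine hadd.congr_deriv ?_
    have e1 : ⟪M (u' s), u'' s⟫ = ⟪M (u'' s), u' s⟫ := by
      rw [hMsym]; exact real_inner_comm _ _
    have e2 : ⟪A (u' s), u s⟫ = ⟪A (u s), u' s⟫ := by
      rw [hAsym]; exact real_inner_comm _ _
    simp only [hQ'def]
    rw [e1, e2]; ring
  have hcontQ : ContinuousOn Q (Icc 0 T) :=
    ((M.continuous.comp_continuousOn hcontu').inner hcontu').add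
      ((A.continuous.comp_continuousOn hcontu).inner hcontu)
  have hcontQ' : ContinuousOn Q' (Icc 0 T) :=
    (continuousOn_const.mul ((M.continuous.comp_continuousOn hu'').inner hcontu')).add
      (continuousOn_const.mul ((A.continuous.comp_continuousOn hcontu).inner hcontu'))
  refine le_of_forall_pos_le_add ?_
  intro ε hε
  set D : ℝ → ℝ := fun s => Q s + ε ^ 2 with hDdef
  have hDpos : ∀ s, 0 < D s := fun s => by
    have := hQnonneg s; simp only [hDdef]; positivity
  set G : ℝ → ℝ := fun s => Real.sqrt (D s) with hGdef
  set G' : ℝ → ℝ := fun s => Q' s / (2 * Real.sqrt (D s)) with hG'def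
  have hGderiv : ∀ s ∈ Icc (0:ℝ) T, HasDerivAt G (G' s) s := fun s hs =>
    ((hQderiv s hs).add_const (ε ^ 2)).sqrt (ne_of_gt (hDpos s))
  -- bound on the derivative on Ioc
  have hbound : ∀ s ∈ Ioc (0:ℝ) T, G' s ≤ (Real.sqrt ρstar)⁻¹ * ‖f s‖ := by
    intro s hs
    have hfu : ⟪M (u'' s), u' s⟫ + ⟪A (u s), u' s⟫ = ⟪f s, u' s⟫ := heq s hs (u' s)
    have hQ'eq : Q' s = 2 * ⟪f s, u' s⟫ := by simp only [hQ'def]; linarith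
    have hD := hDpos s
    have hsq : Real.sqrt (D s) ^ 2 = D s := Real.sq_sqrt hD.le
    have hsqpos : 0 < Real.sqrt (D s) := Real.sqrt_pos.mpr hD
    have hρs : 0 < Real.sqrt ρstar := Real.sqrt_pos.mpr hρ
    have hρsq : Real.sqrt ρstar ^ 2 = ρstar := Real.sq_sqrt hρ.le
    have hnorm : ‖u' s‖ ≤ Real.sqrt (D s) / Real.sqrt ρstar := by
      rw [le_div_iff₀ hρs]
      have h1 : ρstar * ‖u' s‖ ^ 2 ≤ D s := by
        have h2 := hMcoer (u' s); have h3 := hAnn (u s)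
        have h4 := hε
        simp only [hDdef, hQdef]; nlinarith
      nlinarith [norm_nonneg (u' s), Real.sqrt_nonneg (D s)]
    have hinner : ⟪f s, u' s⟫ ≤ ‖f s‖ * (Real.sqrt (D s) / Real.sqrt ρstar) :=
      le_trans (real_inner_le_norm _ _)
        (mul_le_mul_of_nonneg_left hnorm (norm_nonneg _))
    simp only [hG'def, hQ'eq]
    rw [div_le_iff₀ (by positivity)]
    calc 2 * ⟪f s, u' s⟫ ≤ 2 * (‖f s‖ * (Real.sqrt (D s) / Real.sqrt ρstar)) := by linarith
      _ = (Real.sqrt ρstar)⁻¹ * ‖f s‖ * (2 * Real.sqrt (D s)) := by field_simp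
  -- FTC
  have hsub : Icc (0:ℝ) t ⊆ Icc 0 T := Icc_subset_Icc le_rfl htT
  have huIcc : uIcc (0:ℝ) t = Icc 0 t := uIcc_of_le ht0
  have hcontG' : ContinuousOn G' (Icc 0 t) := by
    apply (hcontQ'.mono hsub).div
    · exact continuousOn_const.mul (((hcontQ.mono hsub).add continuousOn_const).sqrt)
    · exact fun s hs => ne_of_gt (mul_pos two_pos (Real.sqrt_pos.mpr (hDpos s)))
  have hintG' : IntervalIntegrable G' MeasureTheory.volume 0 t :=
    (hcontG'.mono huIcc.subset).intervalIntegrable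
  have hFTC : ∫ τ in (0:ℝ)..t, G' τ = G t - G 0 := by
    apply intervalIntegral.integral_eq_sub_of_hasDerivAt
    · intro s hs
      exact hGderiv s (hsub (huIcc ▸ hs))
    · exact hintG'
  -- integral comparison
  have hcontf : ContinuousOn (fun τ => (Real.sqrt ρstar)⁻¹ * ‖f τ‖) (Icc 0 t) :=
    continuousOn_const.mul ((hf.mono hsub).norm)
  have hintf : IntervalIntegrable (fun τ => (Real.sqrt ρstar)⁻¹ * ‖f τ‖)
      MeasureTheory.volume 0 t := (hcontf.mono huIcc.subset).intervalIntegrable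
  have hae : G' ≤ᵐ[MeasureTheory.volume.restrict (Icc (0:ℝ) t)]
      fun τ => (Real.sqrt ρstar)⁻¹ * ‖f τ‖ := by
    have h0 : ∀ᵐ s ∂(MeasureTheory.volume.restrict (Icc (0:ℝ) t)), s ≠ 0 := by
      refine MeasureTheory.ae_restrict_of_ae ?_
      rw [MeasureTheory.ae_iff]
      have : {s : ℝ | ¬ s ≠ 0} = {0} := by ext s; simp
      rw [this]; exact MeasureTheory.measure_singleton 0
    filter_upwards [MeasureTheory.ae_restrict_mem measurableSet_Icc, h0] with s hs hs0
    exact hbound s ⟨lt_of_le_of_ne hs.1 (Ne.symm hs0), le_trans hs.2 htT⟩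
  have hmono : ∫ τ in (0:ℝ)..t, G' τ ≤ ∫ τ in (0:ℝ)..t, (Real.sqrt ρstar)⁻¹ * ‖f τ‖ :=
    intervalIntegral.integral_mono_ae_restrict ht0 hintG' hintf hae
  have hGt : G t ≤ G 0 + (Real.sqrt ρstar)⁻¹ * ∫ τ in (0:ℝ)..t, ‖f τ‖ := by
    have : (Real.sqrt ρstar)⁻¹ * ∫ τ in (0:ℝ)..t, ‖f τ‖
        = ∫ τ in (0:ℝ)..t, (Real.sqrt ρstar)⁻¹ * ‖f τ‖ := by
      rw [← intervalIntegral.integral_const_mul]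
    rw [this]; linarith [hFTC ▸ hmono]
  -- relate E and G
  have hEt : E t ≤ G t := by
    rw [hE t]
    have hq : (⟪M (u' t), u' t⟫ + ⟪A (u t), u t⟫ : ℝ) = Q t := rfl
    rw [hq]
    exact Real.sqrt_le_sqrt (le_add_of_nonneg_right (sq_nonneg ε))
  have hG0 : G 0 ≤ E 0 + ε := by
    rw [hE 0]
    have hq : (⟪M (u' 0), u' 0⟫ + ⟪A (u 0), u 0⟫ : ℝ) = Q 0 := rfl
    rw [hq]
    have h1 : D 0 ≤ (Real.sqrt (Q 0) + ε) ^ 2 := by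
      have := Real.sq_sqrt (hQnonneg 0)
      have := Real.sqrt_nonneg (Q 0)
      simp only [hDdef]; nlinarith
    calc G 0 ≤ Real.sqrt ((Real.sqrt (Q 0) + ε) ^ 2) := Real.sqrt_le_sqrt h1
      _ = Real.sqrt (Q 0) + ε := Real.sqrt_sq (by positivity)
  calc E t ≤ G t := hEt
    _ ≤ G 0 + (Real.sqrt ρstar)⁻¹ * ∫ τ in (0:ℝ)..t, ‖f τ‖ := hGt
    _ ≤ E 0 + ε + (Real.sqrt ρstar)⁻¹ * ∫ τ in (0:ℝ)..t, ‖f τ‖ := by linarith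
    _ = E 0 + (Real.sqrt ρstar)⁻¹ * (∫ τ in (0:ℝ)..t, ‖f τ‖) + ε := by ring
end
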